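/- A partition λ is a doubled distinct partition (λ ∈ 𝒟𝒟) if and only if its binary word ψ(λ) = (c_k)_{k∈ℤ} satisfies c_0 = 1 and c_{−k} = 1 − c_k for all integers k ≥ 1. -/

import Mathlib

open scoped Classical

/-- `p k` is the `(k+1)`-st part `λ_{k+1}` of the partition `λ` :
partitions are encoded by their (eventually zero, antitone) sequence of parts. -/
def IsPartition (p : ℕ → ℕ) : Prop :=
  Antitone p ∧ ∃ N, ∀ i, N ≤ i → p i = 0

/-- The number of (nonzero) parts of a partition. -/
noncomputable def plen (p : ℕ → ℕ) : ℕ := Nat.card {i : ℕ // p i ≠ 0}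

/-- The number of boxes `|λ|` of a partition. -/
noncomputable def psize (p : ℕ → ℕ) : ℕ := ∑ i ∈ Finset.range (plen p), p i

/-- The conjugate partition : `pconj p j = λ^tr_{j+1}`. -/
noncomputable def pconj (p : ℕ → ℕ) (j : ℕ) : ℕ := Nat.card {i : ℕ // j + 1 ≤ p i}

/-- The size of the Durfee square of a partition. -/
noncomputable def durfee (p : ℕ → ℕ) : ℕ := Nat.card {i : ℕ // i + 1 ≤ p i}

/-- The cells (boxes) of the Young diagram, `0`-indexed : `(i, j)` is the box in
row `i+1` and column `j+1`. -/
noncomputable def cells (p : ℕ → ℕ) : Finset (ℕ × ℕ) :=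
  (Finset.range (plen p) ×ˢ Finset.range (p 0)).filter fun s => s.2 < p s.1

/-- The hook length of the (0-indexed) box `(i, j)` :
`h = λ_{i+1} - (j+1) + λ^tr_{j+1} - (i+1) + 1`. -/
noncomputable def hookLen (p : ℕ → ℕ) (i j : ℕ) : ℕ :=
  (p i - j) + (pconj p j - i) - 1

/-- The multiset of hook lengths `ℋ(λ)`. -/
noncomputable def hooks (p : ℕ → ℕ) : Multiset ℕ :=
  (cells p).val.map fun s => hookLen p s.1 s.2

/-- The multiset of hook lengths of the boxes strictly above the main diagonal. -/
noncomputable def hooksAbove (p : ℕ → ℕ) : Multiset ℕ :=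
  ((cells p).filter fun s => s.1 < s.2).val.map fun s => hookLen p s.1 s.2

/-- The multiset of hook lengths of the boxes strictly below the main diagonal. -/
noncomputable def hooksBelow (p : ℕ → ℕ) : Multiset ℕ :=
  ((cells p).filter fun s => s.2 < s.1).val.map fun s => hookLen p s.1 s.2

/-- `p` is an `n`-core : no hook length is equal to `n`. -/
def IsCore (n : ℕ) (p : ℕ → ℕ) : Prop := n ∉ hooks p

/-- Self-conjugate partitions. -/
def SelfConj (p : ℕ → ℕ) : Prop := p = pconj p

/-- Distinct partitions (strictly decreasing nonzero parts). -/
def IsDistinct (p : ℕ → ℕ) : Prop := ∀ i, p (i + 1) ≠ 0 → p (i + 1) < p i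

/-- Doubled distinct partitions : `λ_i = λ^tr_i + 1` for `i` at most
the size of the Durfee square. -/
def IsDD (p : ℕ → ℕ) : Prop := ∀ i < durfee p, p i = pconj p i + 1

/-- Conjugates of doubled distinct partitions. -/
def IsDDtr (p : ℕ → ℕ) : Prop := ∃ q, IsPartition q ∧ IsDD q ∧ p = pconj q

/-- The doubled distinct partition `λ̄λ̄` of a distinct partition `λ̄` :
add `λ̄_i` boxes to the `i`-th column of the shifted Young diagram of `λ̄`. -/
noncomputable def double (b : ℕ → ℕ) : ℕ → ℕ := fun i =>
  if i < plen b then b i + (i + 1)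
  else Nat.card {j : ℕ // j < plen b ∧ i + 1 ≤ b j + j}

/-- The self-conjugate partition associated with a distinct partition `λ̄` :
add `λ̄_i - 1` boxes to the `i`-th column of the shifted Young diagram of `λ̄`. -/
noncomputable def scOf (b : ℕ → ℕ) : ℕ → ℕ := fun i =>
  if i < plen b then b i + i
  else Nat.card {j : ℕ // j < plen b ∧ i + 1 ≤ b j + j}

/-- The binary word `ψ(λ) = (c_k)_{k ∈ ℤ}` of a partition :
`c_k = 0` iff `k ∈ {λ_i - i : i ≥ 1}` and `c_k = 1` otherwise
(i.e. iff `k ∈ {j - λ^tr_j - 1 : j ≥ 1}`). -/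
noncomputable def word (p : ℕ → ℕ) (k : ℤ) : ℕ :=
  if ∃ m : ℕ, k = (p m : ℤ) - ((m : ℤ) + 1) then 0 else 1

/-- The `g`-charge of a `g`-core : `m_i = min {k ∈ ℤ : c_{kg+i} = 1}`. -/
noncomputable def ncharge (g : ℕ) (p : ℕ → ℕ) (i : ℕ) : ℤ :=
  sInf {k : ℤ | word p (k * (g : ℤ) + (i : ℤ)) = 1}

/-- The subword of residue `k` modulo `g` of the word of `p`. -/
noncomputable def subword (g k : ℕ) (p : ℕ → ℕ) (i : ℤ) : ℕ :=
  word p ((g : ℤ) * i + (k : ℤ))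

/-- The shift turning the subword of residue `k` into a balanced partition word. -/
noncomputable def qcharge (g : ℕ) (p : ℕ → ℕ) (k : ℕ) : ℤ :=
  (Nat.card {i : ℕ // subword g k p (i : ℤ) = 0} : ℤ) -
    (Nat.card {i : ℕ // subword g k p (-((i : ℤ) + 1)) = 1} : ℤ)

/-- `ν` is the `k`-th component of the `g`-quotient of `p` : its word is the
subword of residue `k` of the word of `p`, reindexed so as to be balanced. -/
def IsQuotientAt (g : ℕ) (p : ℕ → ℕ) (k : ℕ) (ν : ℕ → ℕ) : Prop :=
  ∀ i : ℤ, word ν i = subword g k p (i + qcharge g p k)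

/-- `ω` is the `g`-core of `p` : every subword of its word is sorted
(all `0`'s, then all `1`'s), with transition index the charge of `p`. -/
def IsCoreOf (g : ℕ) (p ω : ℕ → ℕ) : Prop :=
  ∀ k < g, ∀ i : ℤ, (subword g k ω i = 1 ↔ qcharge g p k ≤ i)

/-- `(ω, ν)` is the Littlewood decomposition of `p` for the modulus `g`. -/
def IsLittlewood (g : ℕ) (p ω : ℕ → ℕ) (ν : ℕ → ℕ → ℕ) : Prop :=
  IsCoreOf g p ω ∧ ∀ k < g, IsQuotientAt g p k (ν k)

/-- The number `a_r` of boxes of residue `r` modulo `g`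
(the residue of the box `(i, j)` -- `0`-indexed -- being `(j - i) mod g`). -/
noncomputable def resCount (g : ℕ) (p : ℕ → ℕ) (r : ℕ) : ℕ :=
  ((cells p).filter fun s => ((s.2 : ℤ) - (s.1 : ℤ)) % (g : ℤ) = (r : ℤ)).card

/-- The rectangular partition with `r` rows of length `c`. -/
def rect (r c : ℕ) : ℕ → ℕ := fun i => if i < r then c else 0

/-- The statistic `m = max({1} ∪ {(g + λ̄_i)/g : λ̄_i ≡ 0 (mod g)})`. -/
noncomputable def mStat (g : ℕ) (b : ℕ → ℕ) : ℕ :=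
  sSup ({1} ∪ {k : ℕ | ∃ i < plen b, g ∣ b i ∧ k = (g + b i) / g})

/-- The statistic `m' = max({0} ∪ {λ̄_i/g : λ̄_i ≡ g/2 (mod g)})`. -/
noncomputable def mStat' (g : ℕ) (b : ℕ → ℕ) : ℕ :=
  sSup ({0} ∪ {k : ℕ | ∃ i < plen b, 2 * (b i % g) = g ∧ k = b i / g})

/-!
The `0`s of `ψ(λ)` sit at the positions `λ_{m+1} - (m+1)` and, by the duality between a partition
and its conjugate, the `1`s at the positions `j - λ^tr_{j+1}`. Hence the `0`s at positions `k ≥ 0`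
are the values `λ_{m+1} - (m+1)` with `m` below the Durfee size `d`, and the `k > 0` with
`c_{-k} = 1` are the values `λ^tr_{j+1} - j` with `j < d`. The symmetry of the word says exactly
that these two sets coincide. Both are enumerated by strictly decreasing sequences of length `d`,
so this is the equality of the two sequences, i.e. `λ_i = λ^tr_i + 1` for `i ≤ d`.
-/

open Set

lemma Nat.lt_card_iff_mem_of_isLowerSet {s : Set ℕ} (hs : IsLowerSet s) (hfin : s.Finite)
    (i : ℕ) : i < Nat.card s ↔ i ∈ s := by
  obtain rfl | ⟨a, rfl⟩ := hs.eq_univ_or_Iio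
  · exact absurd hfin infinite_univ
  · simp

lemma StrictAnti.eqOn_Iio_iff_image_eq {α : Type*} [Preorder α] {f g : ℕ → α}
    (hf : StrictAnti f) (hg : StrictAnti g) (d : ℕ) :
    EqOn f g (Iio d) ↔ f '' Iio d = g '' Iio d := by
  rw [← Fin.range_val, eqOn_range, ← range_comp, ← range_comp,
    (hf.comp_strictMono Fin.val_strictMono).range_inj (hg.comp_strictMono Fin.val_strictMono)]

lemma word_eq_zero_iff (p : ℕ → ℕ) (k : ℤ) : word p k = 0 ↔ ∃ m : ℕ, k = p m - (m + 1) := by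
  unfold word
  split_ifs with h <;> simp [h]

lemma word_eq_one_iff_forall_ne (p : ℕ → ℕ) (k : ℤ) :
    word p k = 1 ↔ ∀ m : ℕ, k ≠ p m - (m + 1) := by
  unfold word
  split_ifs with h <;> simp_all

lemma word_le_one (p : ℕ → ℕ) (k : ℤ) : word p k ≤ 1 := by
  unfold word
  split_ifs <;> simp

lemma word_symm_iff {w : ℤ → ℕ} (hw : ∀ k, w k ≤ 1) :
    (w 0 = 1 ∧ ∀ k : ℕ, w (-((k : ℤ) + 1)) = 1 - w ((k : ℤ) + 1)) ↔
      {k : ℤ | 0 ≤ k ∧ w k = 0} = {k | 0 < k ∧ w (-k) = 1} := by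
  simp only [Set.ext_iff, mem_ofPred_eq]
  constructor
  · rintro ⟨h0, hsymm⟩ k
    rcases lt_trichotomy k 0 with hk | rfl | hk
    · omega
    · simp [h0]
    · obtain ⟨n, rfl⟩ : ∃ n : ℕ, k = n + 1 := ⟨(k - 1).toNat, by omega⟩
      have := hsymm n
      have := hw (n + 1)
      omega
  · intro h
    refine ⟨?_, fun n => ?_⟩
    · have h0 := h 0
      simp only [le_refl, true_and, lt_irrefl, false_and, iff_false] at h0
      have := hw 0
      omega
    · have := h (n + 1)
      have := hw (n + 1)
      have := hw (-(n + 1))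
      omega

lemma isDD_iff_eqOn (p : ℕ → ℕ) :
    IsDD p ↔ EqOn (fun m : ℕ => (p m : ℤ) - (m + 1)) (fun j : ℕ => (pconj p j : ℤ) - j)
      (Iio (durfee p)) :=
  forall₂_congr fun i _ => by dsimp only; omega

namespace IsPartition

variable {p : ℕ → ℕ}

lemma finite_support (hp : IsPartition p) : {i | p i ≠ 0}.Finite := by
  obtain ⟨N, hN⟩ := hp.2
  exact (finite_Iio N).subset fun i hi => not_le.1 fun h => hi (hN i h)

lemma lt_pconj_iff (hp : IsPartition p) (i j : ℕ) : i < pconj p j ↔ j < p i :=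
  Nat.lt_card_iff_mem_of_isLowerSet (s := {i | j < p i})
    (fun _ _ hab hb => lt_of_lt_of_le hb (hp.1 hab))
    (hp.finite_support.subset fun _ h => Nat.ne_zero_of_lt h) i

lemma lt_durfee_iff (hp : IsPartition p) (i : ℕ) : i < durfee p ↔ i < p i :=
  Nat.lt_card_iff_mem_of_isLowerSet (s := {i | i < p i})
    (fun _ _ hab hb => lt_of_le_of_lt hab (lt_of_lt_of_le hb (hp.1 hab)))
    (hp.finite_support.subset fun _ h => Nat.ne_zero_of_lt h) i

lemma pconj_antitone (hp : IsPartition p) : Antitone (pconj p) := fun _ _ hjj' =>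
  le_of_forall_lt fun i hi =>
    (hp.lt_pconj_iff i _).2 (lt_of_le_of_lt hjj' ((hp.lt_pconj_iff i _).1 hi))

lemma strictAnti_sub_succ (hp : IsPartition p) :
    StrictAnti fun m : ℕ => (p m : ℤ) - (m + 1) := fun m m' hmm' => by
  have := hp.1 hmm'.le
  dsimp only
  omega

lemma strictAnti_pconj_sub (hp : IsPartition p) :
    StrictAnti fun j : ℕ => (pconj p j : ℤ) - j := fun j j' hjj' => by
  have := hp.pconj_antitone hjj'.le
  dsimp only
  omega

lemma word_eq_one_iff (hp : IsPartition p) (k : ℤ) :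
    word p k = 1 ↔ ∃ j : ℕ, k = j - pconj p j := by
  rw [word_eq_one_iff_forall_ne]
  constructor
  · intro hk
    obtain ⟨N, hN⟩ := hp.2
    have hex : ∃ m : ℕ, (p m : ℤ) ≤ k + m := ⟨N + k.natAbs, by rw [hN _ le_self_add]; omega⟩
    -- `m` is the first row ending before column `k + m`, so that column has exactly `m` boxes.
    set m := Nat.find hex
    have hm : (p m : ℤ) ≤ k + m := Nat.find_spec hex
    have hlt : ∀ i < m, k + m < p i := by
      intro i hi
      have h1 := Nat.find_min hex (show m - 1 < m by omega)
      have h2 := hk (m - 1)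
      have h3 := hp.1 (show i ≤ m - 1 by omega)
      push_cast [Nat.cast_sub (show 1 ≤ m by omega)] at h1 h2 h3
      omega
    have hpconj : pconj p (k + m).toNat = m := eq_of_forall_lt_iff fun i => by
      rw [hp.lt_pconj_iff]
      constructor
      · intro h
        by_contra! him
        have := hp.1 him
        omega
      · intro h
        have := hlt i h
        omega
    exact ⟨(k + m).toNat, by omega⟩
  · rintro ⟨j, rfl⟩ m hm
    have := hp.lt_pconj_iff m j
    omega

lemma setOf_word_eq_zero (hp : IsPartition p) :
    {k : ℤ | 0 ≤ k ∧ word p k = 0} = (fun m : ℕ => (p m : ℤ) - (m + 1)) '' Iio (durfee p) := by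
  ext k
  simp only [mem_ofPred_eq, word_eq_zero_iff, mem_image, mem_Iio, hp.lt_durfee_iff]
  constructor
  · rintro ⟨hk, m, rfl⟩
    exact ⟨m, by omega, rfl⟩
  · rintro ⟨m, hm, rfl⟩
    exact ⟨by omega, m, rfl⟩

lemma setOf_word_neg_eq_one (hp : IsPartition p) :
    {k : ℤ | 0 < k ∧ word p (-k) = 1} = (fun j : ℕ => (pconj p j : ℤ) - j) '' Iio (durfee p) := by
  ext k
  simp only [mem_ofPred_eq, hp.word_eq_one_iff, mem_image, mem_Iio, hp.lt_durfee_iff,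
    ← hp.lt_pconj_iff]
  constructor
  · rintro ⟨hk, j, hj⟩
    exact ⟨j, by omega, by omega⟩
  · rintro ⟨j, hj, rfl⟩
    exact ⟨by omega, j, by omega⟩

end IsPartition

/-- A partition `λ` is a doubled distinct partition (`λ ∈ 𝒟𝒟`) if and only if
its binary word `ψ(λ) = (c_k)` satisfies `c_0 = 1` and `c_{-k} = 1 - c_k` for
all integers `k ≥ 1`. -/
theorem doubled_distinct_iff_word (p : ℕ → ℕ) (hp : IsPartition p) :
    IsDD p ↔
      (word p 0 = 1 ∧ ∀ k : ℕ, word p (-((k : ℤ) + 1)) = 1 - word p ((k : ℤ) + 1)) := by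
  rw [word_symm_iff (word_le_one p), hp.setOf_word_eq_zero, hp.setOf_word_neg_eq_one,
    isDD_iff_eqOn, hp.strictAnti_sub_succ.eqOn_Iio_iff_image_eq hp.strictAnti_pconj_sub]
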